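/- arXiv:1902.06826 — 5 statements merged into one kernel-verified Lean document; each statement's English description precedes it below -/
import Mathlib

section
/- Let T = (T_1,…,T_d) be a commuting tuple of bounded operators on a Hilbert space H and let ξ ∈ H be a unit vector. Assume there is γ > 0 such that for each t ∈ [0, 2π] there exists an invertible operator Y_t ∈ B(H) with ‖Y_t‖ ≤ γ, Y_t⁻¹ ξ = ξ, and Y_t T_k Y_t⁻¹ = e^{it} T_k for all k. Then for every finite set Ξ ⊂ ℕ^d of multi-indices, every ℓ ∈ ℕ, and every family of complex scalars (c_α)_{α ∈ Ξ}, we have ‖∑_{α ∈ Ξ, |α|=ℓ} c_α T^α ξ‖ ≤ γ · ‖∑_{α ∈ Ξ} c_α T^α ξ‖. -/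
open ContinuousLinearMap

/-- `T^α = T_1^{α_1} ⋯ T_d^{α_d}`. -/
noncomputable def opProd {H : Type*} [NormedAddCommGroup H] [InnerProductSpace ℂ H]
    {d : ℕ} (T : Fin d → H →L[ℂ] H) (α : Fin d → ℕ) : H →L[ℂ] H :=
  (List.ofFn fun i => (T i) ^ (α i)).prod

section helpers
variable {H : Type*} [NormedAddCommGroup H] [InnerProductSpace ℂ H]

lemma semiconj_pow (Y A : H →L[ℂ] H) (z : ℂ) (h : Y * A = z • (A * Y)) (n : ℕ) :
    Y * A ^ n = z ^ n • (A ^ n * Y) := by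
  induction n with
  | zero => simp
  | succ n ih =>
    rw [pow_succ, ← mul_assoc, ih, smul_mul_assoc, mul_assoc, h, mul_smul_comm,
      smul_smul, ← pow_succ, mul_assoc]

lemma semiconj_opProd {d : ℕ} (Y : H →L[ℂ] H) (z : ℂ) (T : Fin d → H →L[ℂ] H)
    (α : Fin d → ℕ) (h : ∀ i, Y * T i = z • (T i * Y)) :
    Y * opProd T α = z ^ (∑ i, α i) • (opProd T α * Y) := by
  induction d with
  | zero => simp [opProd, List.ofFn_zero]
  | succ d ih =>
    have ht := ih (fun i => T i.succ) (fun i => α i.succ) (fun i => h i.succ)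
    have h0 := semiconj_pow Y (T 0) z (h 0) (α 0)
    have hrw : opProd T α = (T 0) ^ (α 0) * opProd (fun i => T i.succ) (fun i => α i.succ) := by
      simp [opProd, List.ofFn_succ]
    rw [hrw, ← mul_assoc, h0, smul_mul_assoc, mul_assoc, ht, mul_smul_comm, smul_smul,
      ← pow_add, Fin.sum_univ_succ, ← mul_assoc]

lemma geom_exp_sum_zero (N : ℕ) (m : ℤ) (hm : m ≠ 0) (hmN : m.natAbs < N) :
    ∑ j ∈ Finset.range N, Complex.exp (2 * Real.pi * Complex.I * m * j / N) = 0 := by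
  have hN0 : (0:ℕ) < N := lt_of_le_of_lt (Nat.zero_le _) hmN
  have hNC : (N:ℂ) ≠ 0 := Nat.cast_ne_zero.2 hN0.ne'
  set ζ : ℂ := Complex.exp (2 * Real.pi * Complex.I * m / N) with hζ
  have hpow : ∀ j : ℕ, Complex.exp (2 * Real.pi * Complex.I * m * j / N) = ζ ^ j := by
    intro j
    rw [hζ, ← Complex.exp_nat_mul]
    ring_nf
  have h2 : (2 * (Real.pi:ℂ) * Complex.I) ≠ 0 := by
    simp [Real.pi_ne_zero, Complex.I_ne_zero]
  have hζ1 : ζ ≠ 1 := by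
    rw [hζ, Ne, Complex.exp_eq_one_iff]
    rintro ⟨n, hn⟩
    have h3 : (2*(Real.pi:ℂ)*Complex.I) * ((m:ℂ)/N) = (2*(Real.pi:ℂ)*Complex.I) * n := by
      linear_combination hn
    have h4 : (m:ℂ)/N = n := mul_left_cancel₀ h2 h3
    rw [div_eq_iff hNC] at h4
    have hm' : m = n * N := by exact_mod_cast h4
    have habs : m.natAbs = n.natAbs * N := by rw [hm']; simp [Int.natAbs_mul]
    have hn0 : n ≠ 0 := by rintro rfl; exact hm (by simp [hm'])
    have : 1 ≤ n.natAbs := by omega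
    have := Nat.le_mul_of_pos_left N (show 0 < n.natAbs by omega)
    omega
  have hζN : ζ ^ N = 1 := by
    rw [hζ, ← Complex.exp_nat_mul]
    have : (N:ℂ) * (2 * Real.pi * Complex.I * m / N) = m * (2 * Real.pi * Complex.I) := by
      field_simp
    rw [this, Complex.exp_int_mul_two_pi_mul_I]
  calc ∑ j ∈ Finset.range N, Complex.exp (2 * Real.pi * Complex.I * m * j / N)
      = ∑ j ∈ Finset.range N, ζ ^ j := by simp_rw [hpow]
    _ = (ζ ^ N - 1) / (ζ - 1) := geom_sum_eq hζ1 N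
    _ = 0 := by rw [hζN]; simp

end helpers

/-- extraction of homogeneous components via a norm-controlled circle action. -/
theorem stmt4 {H : Type*} [NormedAddCommGroup H] [InnerProductSpace ℂ H] [CompleteSpace H]
    {d : ℕ} (T : Fin d → H →L[ℂ] H)
    (hcomm : ∀ i j, Commute (T i) (T j))
    (ξ : H) (hξ : ‖ξ‖ = 1) (γ : ℝ) (hγ : 0 < γ)
    (hgauge : ∀ t ∈ Set.Icc (0 : ℝ) (2 * Real.pi), ∃ Y : H ≃L[ℂ] H,
      ‖(Y : H →L[ℂ] H)‖ ≤ γ ∧ Y.symm ξ = ξ ∧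
      ∀ k, (Y : H →L[ℂ] H) * T k * (Y.symm : H →L[ℂ] H) =
        Complex.exp (t * Complex.I) • T k)
    (Ξ : Finset (Fin d → ℕ)) (ℓ : ℕ) (c : (Fin d → ℕ) → ℂ) :
    ‖∑ α ∈ Ξ.filter fun α => (∑ i, α i) = ℓ, c α • opProd T α ξ‖ ≤
      γ * ‖∑ α ∈ Ξ, c α • opProd T α ξ‖ := by
  classical
  set S : H := ∑ α ∈ Ξ, c α • opProd T α ξ with hS
  set P : H := ∑ α ∈ Ξ.filter fun α => (∑ i, α i) = ℓ, c α • opProd T α ξ with hP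
  clear_value S P
  obtain ⟨M, hM⟩ : ∃ M, M = ∑ α ∈ Ξ, ∑ i, α i := ⟨_, rfl⟩
  have hMle : ∀ α ∈ Ξ, (∑ i, α i) ≤ M := fun α hα => hM ▸ Finset.single_le_sum
    (f := fun α => ∑ i, α i) (fun _ _ => Nat.zero_le _) hα
  clear hM
  obtain ⟨N, hN⟩ : ∃ N, N = ℓ + M + 1 := ⟨_, rfl⟩
  have hN0 : 0 < N := by omega
  have hNC : (N:ℂ) ≠ 0 := Nat.cast_ne_zero.2 hN0.ne'
  have hdeg : ∀ α ∈ Ξ, (∑ i, α i) < N := by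
    intro α hα
    have := hMle α hα
    omega
  -- the sample times
  set t : ℕ → ℝ := fun j => 2 * Real.pi * j / N with htdef
  have htmem : ∀ j ∈ Finset.range N, t j ∈ Set.Icc (0:ℝ) (2 * Real.pi) := by
    intro j hj
    rw [Finset.mem_range] at hj
    have hπ := Real.pi_pos
    constructor
    · positivity
    · rw [div_le_iff₀ (by positivity)]
      have hj' : (j:ℝ) ≤ N := by exact_mod_cast hj.le
      nlinarith
  -- choose the gauges
  have hch : ∀ j : Fin N, ∃ Y : H ≃L[ℂ] H,
      ‖(Y : H →L[ℂ] H)‖ ≤ γ ∧ Y.symm ξ = ξ ∧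
      ∀ k, (Y : H →L[ℂ] H) * T k * (Y.symm : H →L[ℂ] H) =
        Complex.exp ((t j) * Complex.I) • T k :=
    fun j => hgauge (t j) (htmem j (Finset.mem_range.2 j.2))
  choose Y hY1 hY2 hY3 using hch
  set z : Fin N → ℂ := fun j => Complex.exp ((t j : ℝ) * Complex.I) with hzdef
  -- basic semiconjugation
  have hsc1 : ∀ (j : Fin N) (k : Fin d),
      ((Y j : H →L[ℂ] H)) * T k = z j • (T k * (Y j : H →L[ℂ] H)) := by
    intro j k
    have hinv : ((Y j).symm : H →L[ℂ] H) * (Y j : H →L[ℂ] H) = 1 := by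
      ext x; simp
    have := congrArg (fun A => A * (Y j : H →L[ℂ] H)) (hY3 j k)
    simpa [mul_assoc, hinv, smul_mul_assoc] using this
  have hsc : ∀ (j : Fin N) (α : Fin d → ℕ),
      ((Y j : H →L[ℂ] H)) * opProd T α = z j ^ (∑ i, α i) • (opProd T α * (Y j : H →L[ℂ] H)) :=
    fun j α => semiconj_opProd _ _ _ _ (hsc1 j)
  have hfix : ∀ j : Fin N, Y j ξ = ξ := by
    intro j
    conv_lhs => rw [← hY2 j]
    rw [ContinuousLinearEquiv.apply_symm_apply]
  -- the rotated vector
  have hYS : ∀ j : Fin N, (Y j : H →L[ℂ] H) S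
      = ∑ α ∈ Ξ, (z j ^ (∑ i, α i) * c α) • opProd T α ξ := by
    intro j
    rw [hS, map_sum]
    refine Finset.sum_congr rfl fun α hα => ?_
    rw [map_smul]
    have : (Y j : H →L[ℂ] H) (opProd T α ξ) = (((Y j : H →L[ℂ] H)) * opProd T α) ξ := rfl
    rw [this, hsc j α]
    simp [ContinuousLinearMap.mul_apply, hfix j, smul_smul, mul_comm]
  -- the Fourier weights
  set w : Fin N → ℂ := fun j => Complex.exp ((-(ℓ:ℝ) * t j : ℝ) * Complex.I) with hwdef
  have hw1 : ∀ j, ‖w j‖ = 1 := by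
    intro j
    rw [hwdef]
    exact Complex.norm_exp_ofReal_mul_I _
  -- orthogonality sums
  have hinner : ∀ dα : ℕ, dα < N →
      ∑ j : Fin N, w j * z j ^ dα = if dα = ℓ then (N:ℂ) else 0 := by
    intro dα hdα
    have hterm : ∀ j : Fin N,
        w j * z j ^ dα = Complex.exp (2 * Real.pi * Complex.I * (((dα:ℤ) - (ℓ:ℤ) : ℤ) : ℂ) * j / N) := by
      intro j
      rw [hwdef, hzdef, ← Complex.exp_nat_mul, ← Complex.exp_add]
      congr 1
      rw [htdef]
      push_cast
      ring
    rw [Finset.sum_congr rfl fun j _ => hterm j]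
    rcases eq_or_ne dα ℓ with h | h
    · subst h
      simp [Finset.card_univ]
    · rw [if_neg h]
      rw [Fin.sum_univ_eq_sum_range
        (fun j => Complex.exp (2 * Real.pi * Complex.I * (((dα:ℤ) - (ℓ:ℤ) : ℤ) : ℂ) * j / N))]
      refine geom_exp_sum_zero N ((dα:ℤ) - (ℓ:ℤ)) ?_ ?_
      · intro hc
        apply h
        omega
      · have : ℓ < N := by omega
        omega
  -- key identity
  have key : (N:ℂ) • P = ∑ j : Fin N, w j • (Y j : H →L[ℂ] H) S := by
    have : ∑ j : Fin N, w j • (Y j : H →L[ℂ] H) S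
        = ∑ α ∈ Ξ, ((∑ j : Fin N, w j * z j ^ (∑ i, α i)) * c α) • opProd T α ξ := by
      rw [Finset.sum_congr rfl fun j _ => by rw [hYS j, Finset.smul_sum]]
      rw [Finset.sum_comm]
      refine Finset.sum_congr rfl fun α hα => ?_
      rw [Finset.sum_mul, Finset.sum_smul]
      refine Finset.sum_congr rfl fun j _ => ?_
      rw [smul_smul, mul_assoc]
    rw [this]
    rw [Finset.sum_congr rfl fun α hα => by rw [hinner _ (hdeg α hα)]]
    rw [hP, Finset.smul_sum, Finset.sum_filter]
    refine Finset.sum_congr rfl fun α hα => ?_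
    by_cases h : (∑ i, α i) = ℓ <;> simp [h, smul_smul]
  -- norm estimates
  have hnorm : (N:ℝ) * ‖P‖ ≤ (N:ℝ) * (γ * ‖S‖) := by
    have h1 : (N:ℝ) * ‖P‖ = ‖(N:ℂ) • P‖ := by
      rw [norm_smul]
      simp
    rw [h1, key]
    calc ‖∑ j : Fin N, w j • (Y j : H →L[ℂ] H) S‖
        ≤ ∑ j : Fin N, ‖w j • (Y j : H →L[ℂ] H) S‖ := norm_sum_le _ _
      _ ≤ ∑ j : Fin N, γ * ‖S‖ := by
          refine Finset.sum_le_sum fun j _ => ?_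
          rw [norm_smul, hw1 j, one_mul]
          calc ‖(Y j : H →L[ℂ] H) S‖ ≤ ‖(Y j : H →L[ℂ] H)‖ * ‖S‖ :=
                (Y j : H →L[ℂ] H).le_opNorm S
            _ ≤ γ * ‖S‖ := mul_le_mul_of_nonneg_right (hY1 j) (norm_nonneg _)
      _ = (N:ℝ) * (γ * ‖S‖) := by simp [Finset.card_univ, mul_comm]
  have hNpos : (0:ℝ) < N := by exact_mod_cast hN0
  exact le_of_mul_le_mul_left hnorm hNpos
end

section
/- Let (V_n)_{n∈ℕ} be a family of contractions on a Hilbert space H such that the row operator V = [V_1 V_2 …] : ⊕_n H → H is a partial isometry (equivalently, ∑_n V_n V_n* is an orthogonal projection). Let M ⊆ H be a closed subspace that is coinvariant for every V_n (i.e., V_n* M ⊆ M) and such that M^⊥ ⊆ ran V. Then the compression P_M V P_M, i.e., the row operator [P_M V_1|_M, P_M V_2|_M, …] : ⊕_n M → M, is a partial isometry. -/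
/-!
Write `E = ∑ₙ VₙVₙ*` and `P = P_M`. Coinvariance of `M` gives `P Vₙ P Vₙ* P = P Vₙ Vₙ* P`,
so the row defect of the compression is `P E P`. Since `M^⊥ ⊆ ran E`, the projection `E`
fixes `1 - P`, whence `P E (1 - P) = 0`, i.e. `P E P = P E`. As `P E P` is self-adjoint,
`P E = E P`, and the product of commuting projections is a projection (onto `ran E ∩ M`).
-/

open ContinuousLinearMap

theorem IsStarProjection.mul_mul_self_of_mul_one_sub_eq {R : Type*} [Ring R] [StarRing R]
    {p e : R} (hp : IsStarProjection p) (he : IsStarProjection e) (h : e * (1 - p) = 1 - p) :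
    IsStarProjection (p * e * p) := by
  have hpep : p * e * p = p * e := by
    have hzero : p * e * (1 - p) = 0 := by rw [mul_assoc, h, hp.mul_one_sub_self]
    rwa [mul_sub, mul_one, sub_eq_zero, eq_comm] at hzero
  have hcomm : Commute p e := by
    have hstar := congrArg star hpep
    simp only [star_mul, hp.isSelfAdjoint.star_eq, he.isSelfAdjoint.star_eq, ← mul_assoc] at hstar
    exact hpep.symm.trans hstar
  rw [hpep]
  exact hp.mul he hcomm

section InnerProductSpace

variable {𝕜 H : Type*} [RCLike 𝕜] [NormedAddCommGroup H] [InnerProductSpace 𝕜 H]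

theorem Submodule.starProjection_eq_of_forall_mem_orthogonal {K : Submodule 𝕜 H}
    [K.HasOrthogonalProjection] {P : H →L[𝕜] H} (hP : ∀ x, P x ∈ K ∧ x - P x ∈ Kᗮ) :
    K.starProjection = P :=
  ContinuousLinearMap.ext fun x => eq_starProjection_of_mem_orthogonal (hP x).1 (hP x).2

theorem ContinuousLinearMap.mul_one_sub_starProjection_of_orthogonal_le_range {K : Submodule 𝕜 H}
    [K.HasOrthogonalProjection] {E : H →L[𝕜] H} (hE : IsIdempotentElem E)
    (hK : Kᗮ ≤ E.range) : E * (1 - K.starProjection) = 1 - K.starProjection := by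
  ext x
  obtain ⟨y, hy⟩ := hK (K.sub_starProjection_mem_orthogonal x)
  change E y = _ at hy
  change E (x - K.starProjection x) = x - K.starProjection x
  rw [← hy, ← mul_apply_eq_comp, hE.eq]

end InnerProductSpace

theorem stmt5_general {H : Type*} [NormedAddCommGroup H] [InnerProductSpace ℂ H] [CompleteSpace H]
    (V : ℕ → H →L[ℂ] H)
    -- `E = ∑_n V_n V_n*` is an orthogonal projection (i.e. the row `V` is a partial isometry)
    (E : H →L[ℂ] H) (hEsa : adjoint E = E) (hEidem : E * E = E)
    (hsum : ∀ x : H, HasSum (fun n => V n (adjoint (V n) x)) (E x))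
    -- `M` is a closed subspace, coinvariant for every `V_n`
    (M : Submodule ℂ H) (hMclosed : IsClosed (M : Set H))
    (hcoinv : ∀ n, ∀ x ∈ M, adjoint (V n) x ∈ M)
    -- `M^⊥ ⊆ ran V` (the range of the row equals the range of the projection `E`)
    (hperp : ∀ x ∈ Mᗮ, ∃ y, E y = x)
    -- `P` is the orthogonal projection of `H` onto `M`
    (P : H →L[ℂ] H) (hP : ∀ x : H, P x ∈ M ∧ x - P x ∈ Mᗮ) :
    ∃ F : H →L[ℂ] H, adjoint F = F ∧ F * F = F ∧
      ∀ x : H, HasSum (fun n => P (V n (P (adjoint (V n) (P x))))) (F x) := by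
  have : CompleteSpace M := hMclosed.completeSpace_coe
  obtain rfl : M.starProjection = P := M.starProjection_eq_of_forall_mem_orthogonal hP
  have hE : IsStarProjection E := ⟨hEidem, isSelfAdjoint_iff'.mpr hEsa⟩
  have hF := isStarProjection_starProjection.mul_mul_self_of_mul_one_sub_eq hE
    (mul_one_sub_starProjection_of_orthogonal_le_range hEidem hperp)
  refine ⟨_, isSelfAdjoint_iff'.mp hF.isSelfAdjoint, hF.isIdempotentElem.eq, fun x => ?_⟩
  have hterm : ∀ n, M.starProjection (adjoint (V n) (M.starProjection x)) =
      adjoint (V n) (M.starProjection x) := fun n =>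
    M.starProjection_eq_self_iff.mpr (hcoinv n _ (M.starProjection_apply_mem x))
  simpa only [hterm, mul_apply_eq_comp] using (hsum (M.starProjection x)).mapL M.starProjection

/-- the compression of a partially isometric row of contractions to a
coinvariant subspace whose orthogonal complement lies in the range of the row is again
a partial isometry (its row "defect" `∑ W_n W_n*` is an orthogonal projection). -/
theorem stmt5 {H : Type*} [NormedAddCommGroup H] [InnerProductSpace ℂ H] [CompleteSpace H]
    (V : ℕ → H →L[ℂ] H) (hV : ∀ n, ‖V n‖ ≤ 1)
    -- `E = ∑_n V_n V_n*` is an orthogonal projection (i.e. the row `V` is a partial isometry)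
    (E : H →L[ℂ] H) (hEsa : adjoint E = E) (hEidem : E * E = E)
    (hsum : ∀ x : H, HasSum (fun n => V n (adjoint (V n) x)) (E x))
    -- `M` is a closed subspace, coinvariant for every `V_n`
    (M : Submodule ℂ H) (hMclosed : IsClosed (M : Set H))
    (hcoinv : ∀ n, ∀ x ∈ M, adjoint (V n) x ∈ M)
    -- `M^⊥ ⊆ ran V` (the range of the row equals the range of the projection `E`)
    (hperp : ∀ x ∈ Mᗮ, ∃ y, E y = x)
    -- `P` is the orthogonal projection of `H` onto `M`
    (P : H →L[ℂ] H) (hP : ∀ x : H, P x ∈ M ∧ x - P x ∈ Mᗮ) :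
    ∃ F : H →L[ℂ] H, adjoint F = F ∧ F * F = F ∧
      ∀ x : H, HasSum (fun n => P (V n (P (adjoint (V n) (P x))))) (F x) :=
  stmt5_general V E hEsa hEidem hsum M hMclosed hcoinv hperp P hP
end

section
/- For t > 0 let M_1(t) = N_1 and M_2(t) = N_1 + t N_2, where N_1 = E_{21}, N_2 = E_{31} are 3×3 matrix units. Then M_1(t)M_1(t)* + M_2(t)M_2(t)* = diag-block with lower-right 2×2 block [[2, t],[t, t²]], and its operator norm equals f(t)² where f(t) = √(1 + t²/2 + √(1 + t⁴/4)). Consequently R_k(t) = M_k(t)/f(t) for k = 1,2 defines a commuting nilpotent row contraction pair R(t) with R_1(t)² = R_1(t)R_2(t) = R_2(t)² = 0. -/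
/-!
`L = f(t)²` is the larger root of `λ² - (2 + t²)λ + t²`, the characteristic polynomial of the
block `[[2, t], [t, t²]]`. Hence `L` lies in the spectrum of `A = M₁M₁* + M₂M₂*`, and `L - A` is
positive semidefinite: it is `diag(L, 0, 0)` plus a rank-one positive matrix, because its lower
block has determinant `(L - 2)(L - t²) - t² = 0`. In the C⋆-algebra of matrices a positive element
`A ≤ L` with `L` in its spectrum has norm `L`; and `A ≤ L` says exactly that `M / f(t)` is a row
contraction. All products of two `Mₖ` vanish because every `Mₖ` is supported in column 0 and
vanishes in row 0.
-/

open Matrix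

/-- `f(t) = √(1 + t²/2 + √(1 + t⁴/4))`. -/
noncomputable def fDA (t : ℝ) : ℝ :=
  Real.sqrt (1 + t ^ 2 / 2 + Real.sqrt (1 + t ^ 4 / 4))

open scoped MatrixOrder Matrix.Norms.L2Operator ComplexOrder

lemma CStarAlgebra.norm_eq_of_mem_spectrum_of_le_algebraMap {A : Type*} [CStarAlgebra A]
    [Nontrivial A] [PartialOrder A] [StarOrderedRing A] {a : A} {r : ℝ} (ha : 0 ≤ a)
    (hr : r ∈ spectrum ℝ a) (har : a ≤ algebraMap ℝ A r) : ‖a‖ = r :=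
  le_antisymm ((norm_le_iff_le_algebraMap a (spectrum_nonneg_of_nonneg ha hr) ha).2 har)
    ((Real.le_norm_self r).trans (spectrum.norm_le_norm_of_mem hr))

lemma Matrix.norm_toEuclideanCLM_eq_of_isRoot_charpoly {n : Type*} [Fintype n] [DecidableEq n]
    [Nonempty n] {X : Matrix n n ℂ} {r : ℝ} (hX : X.PosSemidef) (hr : X.charpoly.IsRoot (r : ℂ))
    (hXr : (r • 1 - X).PosSemidef) :
    ‖toEuclideanCLM (𝕜 := ℂ) X‖ = r := by
  rw [← cstar_norm_def]
  refine CStarAlgebra.norm_eq_of_mem_spectrum_of_le_algebraMap hX.nonneg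
    ((spectrum.algebraMap_mem_iff ℂ).1 (mem_spectrum_of_isRoot_charpoly hr)) ?_
  rw [Algebra.algebraMap_eq_smul_one]
  exact hXr

section

variable (t : ℝ)

def rowSquare : Matrix (Fin 3) (Fin 3) ℂ :=
  !![0, 0, 0; 0, 2, (t : ℂ); 0, (t : ℂ), (t : ℂ) ^ 2]

lemma fDA_sq : fDA t ^ 2 = 1 + t ^ 2 / 2 + √(1 + t ^ 4 / 4) :=
  Real.sq_sqrt (by positivity)

lemma sq_lt_fDA_sq : t ^ 2 < fDA t ^ 2 := by
  have hs : √(1 + t ^ 4 / 4) ^ 2 = 1 + t ^ 4 / 4 := Real.sq_sqrt (by positivity)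
  nlinarith [fDA_sq t, Real.sqrt_nonneg (1 + t ^ 4 / 4)]

lemma fDA_sq_sub_two_mul_sub_sq : (fDA t ^ 2 - 2) * (fDA t ^ 2 - t ^ 2) = t ^ 2 := by
  have hs : √(1 + t ^ 4 / 4) ^ 2 = 1 + t ^ 4 / 4 := Real.sq_sqrt (by positivity)
  rw [fDA_sq]
  linear_combination hs

lemma isRoot_charpoly_rowSquare : (rowSquare t).charpoly.IsRoot ((fDA t ^ 2 : ℝ) : ℂ) := by
  have h : ((fDA t : ℂ) ^ 2 - 2) * ((fDA t : ℂ) ^ 2 - t ^ 2) = t ^ 2 := by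
    exact_mod_cast congrArg Complex.ofReal (fDA_sq_sub_two_mul_sub_sq t)
  simp [Polynomial.IsRoot, eval_charpoly, det_fin_three, rowSquare]
  linear_combination (fDA t : ℂ) ^ 2 * h

lemma posSemidef_fDA_sq_smul_one_sub_rowSquare : (fDA t ^ 2 • 1 - rowSquare t).PosSemidef := by
  set L := fDA t ^ 2
  have hL : 0 < L - t ^ 2 := sub_pos.2 (sq_lt_fDA_sq t)
  have hLC : (L : ℂ) - t ^ 2 ≠ 0 := by exact_mod_cast hL.ne'
  have h : ((L : ℂ) - 2) * ((L : ℂ) - t ^ 2) = t ^ 2 := by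
    exact_mod_cast congrArg Complex.ofReal (fDA_sq_sub_two_mul_sub_sq t)
  set u : Fin 3 → ℂ := ![0, -t, (L - t ^ 2 : ℝ)]
  have hdecomp : L • 1 - rowSquare t =
      diagonal ![(L : ℂ), 0, 0] + (L - t ^ 2)⁻¹ • vecMulVec u (star u) := by
    ext i j
    fin_cases i <;> fin_cases j <;> simp [u, rowSquare, vecMulVec] <;> field_simp
    all_goals linear_combination h
  rw [hdecomp]
  refine (PosSemidef.diagonal fun i ↦ ?_).add
    ((posSemidef_vecMulVec_self_star u).smul (inv_nonneg.2 hL.le))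
  fin_cases i <;> simp [L]
  exact_mod_cast sq_nonneg (fDA t)

lemma posSemidef_one_sub_inv_fDA_sq_smul_rowSquare :
    (1 - (fDA t ^ 2)⁻¹ • rowSquare t).PosSemidef := by
  have hL : 0 < fDA t ^ 2 := (sq_nonneg t).trans_lt (sq_lt_fDA_sq t)
  have h : 1 - (fDA t ^ 2)⁻¹ • rowSquare t = (fDA t ^ 2)⁻¹ • (fDA t ^ 2 • 1 - rowSquare t) := by
    rw [smul_sub, smul_smul, inv_mul_cancel₀ hL.ne', one_smul]
  rw [h]
  exact (posSemidef_fDA_sq_smul_one_sub_rowSquare t).smul (inv_nonneg.2 hL.le)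

end

open scoped ComplexOrder in
theorem stmt9_general (t : ℝ) :
    letI N₁ : Matrix (Fin 3) (Fin 3) ℂ := Matrix.single 1 0 1
    letI N₂ : Matrix (Fin 3) (Fin 3) ℂ := Matrix.single 2 0 1
    letI M₁ : Matrix (Fin 3) (Fin 3) ℂ := N₁
    letI M₂ : Matrix (Fin 3) (Fin 3) ℂ := N₁ + (t : ℂ) • N₂
    letI R₁ : Matrix (Fin 3) (Fin 3) ℂ := ((fDA t : ℂ))⁻¹ • M₁
    letI R₂ : Matrix (Fin 3) (Fin 3) ℂ := ((fDA t : ℂ))⁻¹ • M₂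
    M₁ * M₁ᴴ + M₂ * M₂ᴴ =
      !![0, 0, 0; 0, 2, (t : ℂ); 0, (t : ℂ), (t : ℂ) ^ 2] ∧
    ‖Matrix.toEuclideanCLM (𝕜 := ℂ) (M₁ * M₁ᴴ + M₂ * M₂ᴴ)‖ = fDA t ^ 2 ∧
    R₁ * R₂ = R₂ * R₁ ∧
    R₁ ^ 2 = 0 ∧ R₁ * R₂ = 0 ∧ R₂ * R₁ = 0 ∧ R₂ ^ 2 = 0 ∧
    (1 - (R₁ * R₁ᴴ + R₂ * R₂ᴴ)).PosSemidef := by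
  set N₁ : Matrix (Fin 3) (Fin 3) ℂ := single 1 0 1
  set N₂ : Matrix (Fin 3) (Fin 3) ℂ := single 2 0 1
  set M₂ : Matrix (Fin 3) (Fin 3) ℂ := N₁ + (t : ℂ) • N₂
  set c : ℂ := (fDA t : ℂ)⁻¹
  have hsq : N₁ * N₁ᴴ + M₂ * M₂ᴴ = rowSquare t := by
    ext i j
    fin_cases i <;> fin_cases j <;> simp [M₂, N₁, N₂, rowSquare, mul_apply, single] <;> ring
  have hN : N₁ * N₁ = 0 ∧ N₁ * N₂ = 0 ∧ N₂ * N₁ = 0 ∧ N₂ * N₂ = 0 := by simp [N₁, N₂]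
  have h₁₂ : c • N₁ * c • M₂ = 0 := by simp [M₂, mul_add, hN]
  have h₂₁ : c • M₂ * c • N₁ = 0 := by simp [M₂, add_mul, hN]
  have h₁₁ : (c • N₁) ^ 2 = 0 := by simp [sq, hN]
  have h₂₂ : (c • M₂) ^ 2 = 0 := by simp [sq, M₂, add_mul, mul_add, hN]
  have hc : star c * c = ((fDA t ^ 2)⁻¹ : ℝ) := by simp [c, Complex.conj_ofReal, sq]
  have hR : c • N₁ * (c • N₁)ᴴ + c • M₂ * (c • M₂)ᴴ = (fDA t ^ 2)⁻¹ • rowSquare t := by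
    simp only [conjTranspose_smul, smul_mul_assoc, mul_smul_comm, smul_smul, ← smul_add, hc,
      Complex.coe_smul, hsq]
  have hpos : (rowSquare t).PosSemidef :=
    hsq ▸ (posSemidef_self_mul_conjTranspose N₁).add (posSemidef_self_mul_conjTranspose M₂)
  refine ⟨hsq, ?_, by rw [h₁₂, h₂₁], h₁₁, h₁₂, h₂₁, h₂₂, ?_⟩
  · rw [hsq]
    exact norm_toEuclideanCLM_eq_of_isRoot_charpoly hpos (isRoot_charpoly_rowSquare t)
      (posSemidef_fDA_sq_smul_one_sub_rowSquare t)
  · rw [hR]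
    exact posSemidef_one_sub_inv_fDA_sq_smul_rowSquare t

open scoped ComplexOrder in
/-- with `M₁(t) = N₁`, `M₂(t) = N₁ + tN₂`, the defect `M₁M₁* + M₂M₂*` is the
stated matrix whose operator norm is `f(t)²`, and the normalized pair `R(t) = M(t)/f(t)` is a
commuting nilpotent row contraction with all products of length two equal to zero. -/
theorem stmt9 (t : ℝ) (ht : 0 < t) :
    letI N₁ : Matrix (Fin 3) (Fin 3) ℂ := Matrix.single 1 0 1
    letI N₂ : Matrix (Fin 3) (Fin 3) ℂ := Matrix.single 2 0 1
    letI M₁ : Matrix (Fin 3) (Fin 3) ℂ := N₁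
    letI M₂ : Matrix (Fin 3) (Fin 3) ℂ := N₁ + (t : ℂ) • N₂
    letI R₁ : Matrix (Fin 3) (Fin 3) ℂ := ((fDA t : ℂ))⁻¹ • M₁
    letI R₂ : Matrix (Fin 3) (Fin 3) ℂ := ((fDA t : ℂ))⁻¹ • M₂
    M₁ * M₁ᴴ + M₂ * M₂ᴴ =
      !![0, 0, 0; 0, 2, (t : ℂ); 0, (t : ℂ), (t : ℂ) ^ 2] ∧
    ‖Matrix.toEuclideanCLM (𝕜 := ℂ) (M₁ * M₁ᴴ + M₂ * M₂ᴴ)‖ = fDA t ^ 2 ∧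
    R₁ * R₂ = R₂ * R₁ ∧
    R₁ ^ 2 = 0 ∧ R₁ * R₂ = 0 ∧ R₂ * R₁ = 0 ∧ R₂ ^ 2 = 0 ∧
    (1 - (R₁ * R₁ᴴ + R₂ * R₂ᴴ)).PosSemidef :=
  stmt9_general t
end

section
/- Let λ ∈ ℂ with |λ| < 1 and 0 < ε < 1, and consider the 2×2 matrices S = [[λ, 1−|λ|],[0, λ]] and T(ε) = [[λ, ε(1−|λ|)],[0, λ]]. If X is an invertible 2×2 complex matrix with X T(ε) = S X, then X is upper triangular of the form [[a, b],[0, εa]] with a ≠ 0, and consequently ‖X‖·‖X⁻¹‖ ≥ 1/ε. -/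
/-!
Comparing the `(0,0)` and `(0,1)` entries of `X T(ε) = S X`, where the off-diagonal entry
`1 - |λ|` of `S` is nonzero, forces `X 1 0 = 0` and `X 1 1 = ε X 0 0`; invertibility then gives
`a := X 0 0 ≠ 0`. An operator norm dominates every matrix entry (test on a basis vector), and the
`(1,1)` entry of `X⁻¹` is `(εa)⁻¹`, so `‖X‖ ‖X⁻¹‖ ≥ |a| / |εa| = 1 / |ε|`.
-/

namespace Matrix

theorem norm_apply_le_norm_toEuclideanCLM {𝕜 n : Type*} [RCLike 𝕜] [Fintype n] [DecidableEq n]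
    (A : Matrix n n 𝕜) (i j : n) : ‖A i j‖ ≤ ‖toEuclideanCLM (𝕜 := 𝕜) A‖ := by
  calc ‖A i j‖ = ‖toEuclideanCLM (𝕜 := 𝕜) A (EuclideanSpace.single j 1) i‖ := by
        simp [EuclideanSpace.single]
    _ ≤ ‖toEuclideanCLM (𝕜 := 𝕜) A (EuclideanSpace.single j 1)‖ := PiLp.norm_apply_le _ _
    _ ≤ ‖toEuclideanCLM (𝕜 := 𝕜) A‖ := by
        simpa using (toEuclideanCLM (𝕜 := 𝕜) A).le_opNorm (EuclideanSpace.single j 1)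

theorem inv_upper_fin_two_apply_one_one {K : Type*} [Field K] {a : K} (ha : a ≠ 0) (b d : K) :
    (!![a, b; 0, d])⁻¹ 1 1 = d⁻¹ := by
  rw [inv_def, adjugate_fin_two_of, det_fin_two_of]
  simp [Ring.inverse_eq_inv', ha]

theorem norm_div_norm_le_opNorm_mul_opNorm_inv_of_upper_fin_two {𝕜 : Type*} [RCLike 𝕜]
    (a b d : 𝕜) :
    ‖a‖ / ‖d‖ ≤ ‖toEuclideanCLM (𝕜 := 𝕜) !![a, b; 0, d]‖ *
      ‖toEuclideanCLM (𝕜 := 𝕜) (!![a, b; 0, d])⁻¹‖ := by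
  rcases eq_or_ne a 0 with rfl | ha
  · simp only [norm_zero, zero_div]
    positivity
  calc ‖a‖ / ‖d‖ = ‖!![a, b; 0, d] 0 0‖ * ‖(!![a, b; 0, d])⁻¹ 1 1‖ := by
        rw [inv_upper_fin_two_apply_one_one ha, norm_inv]
        simp [div_eq_mul_inv]
    _ ≤ _ := by gcongr <;> exact norm_apply_le_norm_toEuclideanCLM _ _ _

theorem eq_upper_of_mul_jordan_eq_jordan_mul {R : Type*} [CommRing R] [IsDomain R]
    {l c t : R} (hc : c ≠ 0) {X : Matrix (Fin 2) (Fin 2) R}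
    (h : X * !![l, t * c; 0, l] = !![l, c; 0, l] * X) :
    X = !![X 0 0, X 0 1; 0, t * X 0 0] := by
  have h00 := congrFun (congrFun h 0) 0
  have h01 := congrFun (congrFun h 0) 1
  simp only [mul_apply, of_apply, cons_val', cons_val_zero, cons_val_fin_one, Fin.sum_univ_two,
    cons_val_one, mul_zero, add_zero] at h00 h01
  have h10 : X 1 0 = 0 :=
    (mul_eq_zero.mp (by linear_combination -h00 : c * X 1 0 = 0)).resolve_left hc
  have h11 : X 1 1 = t * X 0 0 :=
    mul_left_cancel₀ hc (by linear_combination -h01)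
  rw [eta_fin_two X, h10, h11]
  simp

end Matrix

theorem stmt10_general (l : ℂ) (hl : ‖l‖ < 1) (ε : ℝ)
    (X : Matrix (Fin 2) (Fin 2) ℂ) (hX : IsUnit X)
    (hintw :
      X * !![l, (ε : ℂ) * (1 - (‖l‖ : ℂ)); 0, l] =
        !![l, 1 - (‖l‖ : ℂ); 0, l] * X) :
    ∃ a b : ℂ, a ≠ 0 ∧ X = !![a, b; 0, (ε : ℂ) * a] ∧
      1 / ε ≤ ‖Matrix.toEuclideanCLM (𝕜 := ℂ) X‖ *
        ‖Matrix.toEuclideanCLM (𝕜 := ℂ) X⁻¹‖ := by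
  have hc : (1 : ℂ) - ‖l‖ ≠ 0 := by
    rw [sub_ne_zero, ne_comm]
    exact_mod_cast hl.ne
  have hXform := Matrix.eq_upper_of_mul_jordan_eq_jordan_mul hc hintw
  have ha : X 0 0 ≠ 0 := by
    have hdet := (Matrix.isUnit_iff_isUnit_det X).mp hX
    rw [hXform, Matrix.det_fin_two_of, mul_zero, sub_zero, isUnit_iff_ne_zero] at hdet
    exact left_ne_zero_of_mul hdet
  refine ⟨X 0 0, X 0 1, ha, hXform, ?_⟩
  calc 1 / ε ≤ |1 / ε| := le_abs_self _
    _ = ‖X 0 0‖ / ‖(ε : ℂ) * X 0 0‖ := by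
      rw [norm_mul, Complex.norm_real, Real.norm_eq_abs, abs_div, abs_one,
        div_mul_cancel_right₀ (norm_ne_zero_iff.mpr ha), one_div]
    _ ≤ _ := hXform ▸ Matrix.norm_div_norm_le_opNorm_mul_opNorm_inv_of_upper_fin_two _ _ _

/-- any invertible intertwiner `X` with `X T(ε) = S X` between the Jordan-type
`2×2` contractions `S = [[λ, 1−|λ|],[0,λ]]` and `T(ε) = [[λ, ε(1−|λ|)],[0,λ]]` is upper
triangular of the form `[[a, b],[0, εa]]` with `a ≠ 0`, and its condition number is at
least `1/ε`. -/
theorem stmt10 (l : ℂ) (hl : ‖l‖ < 1) (ε : ℝ) (hε0 : 0 < ε) (hε1 : ε < 1)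
    (X : Matrix (Fin 2) (Fin 2) ℂ) (hX : IsUnit X)
    (hintw :
      X * !![l, (ε : ℂ) * (1 - (‖l‖ : ℂ)); 0, l] =
        !![l, 1 - (‖l‖ : ℂ); 0, l] * X) :
    ∃ a b : ℂ, a ≠ 0 ∧ X = !![a, b; 0, (ε : ℂ) * a] ∧
      1 / ε ≤ ‖Matrix.toEuclideanCLM (𝕜 := ℂ) X‖ *
        ‖Matrix.toEuclideanCLM (𝕜 := ℂ) X⁻¹‖ :=
  stmt10_general l hl ε X hX hintw
end

section
/- Let (X_n)_{n∈ℕ} be a sequence of invertible 3×3 matrices and (ε_n) a sequence of positive reals with ε_n → 0. Suppose each X_n has the form [[a_n, 0, 0],[b_n, a_n f(ε_n)⁻¹, a_n f(ε_n)⁻¹],[c_n, 0, a_n ε_n f(ε_n)⁻¹]] with a_n ≠ 0, where f(t) = √(1 + t²/2 + √(1 + t⁴/4)). Then ‖X_n‖·‖X_n⁻¹‖ ≥ ε_n^{−1/3}·f(ε_n)^{2/3}, and in particular sup_n ‖X_n‖·‖X_n⁻¹‖ = ∞. -/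
open Matrix Filter Topology

theorem Matrix.norm_entry_le_norm_toEuclideanCLM {𝕜 n : Type*} [RCLike 𝕜] [Fintype n]
    [DecidableEq n] (M : Matrix n n 𝕜) (i j : n) :
    ‖M i j‖ ≤ ‖toEuclideanCLM (𝕜 := 𝕜) M‖ :=
  calc ‖M i j‖ = ‖toEuclideanCLM (𝕜 := 𝕜) M (EuclideanSpace.single j 1) i‖ := by
        simp [EuclideanSpace.single, mulVec_single]
    _ ≤ ‖toEuclideanCLM (𝕜 := 𝕜) M (EuclideanSpace.single j 1)‖ := PiLp.norm_apply_le _ _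
    _ ≤ ‖toEuclideanCLM (𝕜 := 𝕜) M‖ := by
        simpa using (toEuclideanCLM (𝕜 := 𝕜) M).le_opNorm (EuclideanSpace.single j 1)

theorem one_le_fDA (t : ℝ) : 1 ≤ fDA t :=
  Real.one_le_sqrt.mpr (by nlinarith [sq_nonneg t, Real.sqrt_nonneg (1 + t ^ 4 / 4)])

theorem Real.rpow_neg_le_max_one_inv {t p : ℝ} (ht : 0 < t) (hp₀ : 0 ≤ p) (hp₁ : p ≤ 1) :
    t ^ (-p) ≤ max 1 t⁻¹ := by
  rcases le_or_gt t 1 with ht₁ | ht₁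
  · calc t ^ (-p) ≤ t ^ (-1 : ℝ) := rpow_le_rpow_of_exponent_ge ht ht₁ (by linarith)
      _ = t⁻¹ := rpow_neg_one t
      _ ≤ max 1 t⁻¹ := le_max_right _ _
  · exact (rpow_le_one_of_one_le_of_nonpos ht₁.le (by linarith)).trans (le_max_left _ _)

section FormMatrix
variable {K : Type*} [Field K]

def formMatrix (a b c F t : K) : Matrix (Fin 3) (Fin 3) K :=
  !![a, 0, 0; b, a * F⁻¹, a * F⁻¹; c, 0, a * t * F⁻¹]

theorem inv_formMatrix {a F t : K} (b c : K) (ha : a ≠ 0) (hF : F ≠ 0) (ht : t ≠ 0) :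
    (formMatrix a b c F t)⁻¹ =
      !![a⁻¹, 0, 0;
         F * (c - b * t) / (a ^ 2 * t), F / a, -(F / (a * t));
         -(c * F / (a ^ 2 * t)), 0, F / (a * t)] := by
  refine inv_eq_right_inv ?_
  ext i j
  fin_cases i <;> fin_cases j <;>
    simp [formMatrix, mul_apply, Fin.sum_univ_three, one_apply] <;> field_simp <;> ring

end FormMatrix

theorem max_one_inv_mul_le_norm_mul_norm_inv {a : ℂ} {F t : ℝ} (b c : ℂ) (ha : a ≠ 0)
    (hF : 0 < F) (ht : 0 < t) :
    max 1 t⁻¹ * F ≤ ‖toEuclideanCLM (𝕜 := ℂ) (formMatrix a b c (F : ℂ) t)‖ *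
      ‖toEuclideanCLM (𝕜 := ℂ) (formMatrix a b c (F : ℂ) t)⁻¹‖ := by
  set M := formMatrix a b c (F : ℂ) t
  have hinv := inv_formMatrix b c ha (Complex.ofReal_ne_zero.mpr hF.ne')
    (Complex.ofReal_ne_zero.mpr ht.ne')
  have hM : ‖a‖ ≤ ‖toEuclideanCLM (𝕜 := ℂ) M‖ := by
    simpa [M, formMatrix] using norm_entry_le_norm_toEuclideanCLM M 0 0
  have hM₁₁ : F / ‖a‖ ≤ ‖toEuclideanCLM (𝕜 := ℂ) M⁻¹‖ := by
    simpa [M, hinv, abs_of_pos hF] using norm_entry_le_norm_toEuclideanCLM M⁻¹ 1 1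
  have hM₁₂ : F / (‖a‖ * t) ≤ ‖toEuclideanCLM (𝕜 := ℂ) M⁻¹‖ := by
    simpa [M, hinv, abs_of_pos hF, abs_of_pos ht] using
      norm_entry_le_norm_toEuclideanCLM M⁻¹ 1 2
  have ha' : 0 < ‖a‖ := norm_pos_iff.mpr ha
  have hprod {x : ℝ} (hx : x / ‖a‖ ≤ ‖toEuclideanCLM (𝕜 := ℂ) M⁻¹‖) :
      x ≤ ‖toEuclideanCLM (𝕜 := ℂ) M‖ * ‖toEuclideanCLM (𝕜 := ℂ) M⁻¹‖ :=
    calc x = ‖a‖ * (x / ‖a‖) := by field_simp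
      _ ≤ ‖a‖ * ‖toEuclideanCLM (𝕜 := ℂ) M⁻¹‖ := by gcongr
      _ ≤ _ := by gcongr
  rw [max_mul_of_nonneg _ _ hF.le, one_mul, inv_mul_eq_div]
  exact max_le (hprod hM₁₁) (hprod (by rwa [div_div, mul_comm t]))

theorem stmt11_general (X : ℕ → Matrix (Fin 3) (Fin 3) ℂ) (ε : ℕ → ℝ)
    (hε : ∀ n, 0 < ε n) (hlim : Tendsto ε atTop (nhds 0))
    (a b c : ℕ → ℂ) (ha : ∀ n, a n ≠ 0)
    (hform : ∀ n, X n =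
      !![a n, 0, 0;
         b n, a n * ((fDA (ε n) : ℂ))⁻¹, a n * ((fDA (ε n) : ℂ))⁻¹;
         c n, 0, a n * (ε n : ℂ) * ((fDA (ε n) : ℂ))⁻¹]) :
    (∀ n, (ε n) ^ (-(1 : ℝ) / 3) * (fDA (ε n)) ^ ((2 : ℝ) / 3) ≤
        ‖Matrix.toEuclideanCLM (𝕜 := ℂ) (X n)‖ *
          ‖Matrix.toEuclideanCLM (𝕜 := ℂ) (X n)⁻¹‖) ∧
    ∀ C : ℝ, ∃ n, C < ‖Matrix.toEuclideanCLM (𝕜 := ℂ) (X n)‖ *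
        ‖Matrix.toEuclideanCLM (𝕜 := ℂ) (X n)⁻¹‖ := by
  have hf n : 1 ≤ fDA (ε n) := one_le_fDA (ε n)
  have bound n : (ε n) ^ (-(1 : ℝ) / 3) * (fDA (ε n)) ^ ((2 : ℝ) / 3) ≤
      ‖toEuclideanCLM (𝕜 := ℂ) (X n)‖ * ‖toEuclideanCLM (𝕜 := ℂ) (X n)⁻¹‖ := by
    rw [hform n, neg_div]
    calc _ ≤ max 1 (ε n)⁻¹ * fDA (ε n) :=
          mul_le_mul (Real.rpow_neg_le_max_one_inv (hε n) (by norm_num) (by norm_num))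
            (Real.rpow_le_self_of_one_le (hf n) (by norm_num))
            (Real.rpow_nonneg (zero_le_one.trans (hf n)) _) (by positivity)
      _ ≤ _ := max_one_inv_mul_le_norm_mul_norm_inv (b n) (c n) (ha n)
          (zero_lt_one.trans_le (hf n)) (hε n)
  refine ⟨bound, fun C => ?_⟩
  have hε₀ : Tendsto ε atTop (𝓝[>] 0) :=
    tendsto_nhdsWithin_iff.mpr ⟨hlim, Eventually.of_forall hε⟩
  obtain ⟨n, hn⟩ :=
    ((tendsto_rpow_neg_nhdsGT_zero (y := -(1 : ℝ) / 3) (by norm_num)).comp hε₀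
      |>.eventually_gt_atTop C).exists
  refine ⟨n, ?_⟩
  calc C < (ε n) ^ (-(1 : ℝ) / 3) := hn
    _ ≤ (ε n) ^ (-(1 : ℝ) / 3) * (fDA (ε n)) ^ ((2 : ℝ) / 3) :=
        le_mul_of_one_le_right (Real.rpow_nonneg (hε n).le _)
          (Real.one_le_rpow (hf n) (by norm_num))
    _ ≤ _ := bound n

/-- for invertible matrices `Xₙ` of the given triangular form with `εₙ → 0`,
the condition numbers satisfy `‖Xₙ‖·‖Xₙ⁻¹‖ ≥ εₙ^{-1/3} f(εₙ)^{2/3}` and are unbounded. -/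
theorem stmt11 (X : ℕ → Matrix (Fin 3) (Fin 3) ℂ) (ε : ℕ → ℝ)
    (hε : ∀ n, 0 < ε n) (hlim : Tendsto ε atTop (nhds 0))
    (hinv : ∀ n, IsUnit (X n))
    (a b c : ℕ → ℂ) (ha : ∀ n, a n ≠ 0)
    (hform : ∀ n, X n =
      !![a n, 0, 0;
         b n, a n * ((fDA (ε n) : ℂ))⁻¹, a n * ((fDA (ε n) : ℂ))⁻¹;
         c n, 0, a n * (ε n : ℂ) * ((fDA (ε n) : ℂ))⁻¹]) :
    (∀ n, (ε n) ^ (-(1 : ℝ) / 3) * (fDA (ε n)) ^ ((2 : ℝ) / 3) ≤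
        ‖Matrix.toEuclideanCLM (𝕜 := ℂ) (X n)‖ *
          ‖Matrix.toEuclideanCLM (𝕜 := ℂ) (X n)⁻¹‖) ∧
    ∀ C : ℝ, ∃ n, C < ‖Matrix.toEuclideanCLM (𝕜 := ℂ) (X n)‖ *
        ‖Matrix.toEuclideanCLM (𝕜 := ℂ) (X n)⁻¹‖ :=
  stmt11_general X ε hε hlim a b c ha hform
end
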